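/- Consider a sequence of morphisms of complex projective spaces P^{i_1} → P^{i_2} → ⋯ with maps φ_N: P^{i_N} → P^{i_{N+1}}, and let E = {E_N} be a vector bundle on this system (so φ_N^* E_{N+1} ≅ E_N). If deg φ_N > 1 for infinitely many N, then for every N and every q ≥ 1 the Chern class c_q(E_N) ∈ H^{2q}(P^{i_N}, Z) ≅ Z vanishes. -/

import Mathlib

/-! The relation `c q N = (deg N)^q * c q (N+1)` telescopes: `c q N` is divisible by
`(∏ deg k)^q` for every finite set of indices `k ≥ N`. Infinitely many degrees are at least `2`,
so these products are unbounded, and an integer with arbitrarily large divisors is zero. -/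

open Finset

theorem Finset.prod_Ico_mul_eq_of_eq_mul_succ {M : Type*} [CommMonoid M] {f a : ℕ → M}
    (h : ∀ n, f n = a n * f (n + 1)) {m n : ℕ} (hmn : m ≤ n) :
    f m = (∏ k ∈ Ico m n, a k) * f n := by
  induction n, hmn using Nat.le_induction with
  | base => simp
  | succ n hmn ih => rw [ih, h n, prod_Ico_succ_top hmn, mul_assoc]

theorem Finset.prod_dvd_of_eq_mul_succ {M : Type*} [CommMonoid M] {f a : ℕ → M}
    (h : ∀ n, f n = a n * f (n + 1)) {m : ℕ} {t : Finset ℕ} (ht : ∀ k ∈ t, m ≤ k) :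
    ∏ k ∈ t, a k ∣ f m := by
  obtain ⟨n, htn⟩ := t.exists_nat_subset_range
  have hsub : t ⊆ Ico m (max m n) := fun k hk =>
    mem_Ico.2 ⟨ht k hk, lt_max_of_lt_right (mem_range.1 (htn hk))⟩
  rw [prod_Ico_mul_eq_of_eq_mul_succ h (le_max_left m n)]
  exact (prod_dvd_prod_of_subset _ _ _ hsub).mul_right _

theorem Set.Infinite.exists_lt_prod {ι : Type*} {f : ι → ℕ} {s : Set ι} (hs : s.Infinite)
    (hf : ∀ i ∈ s, 1 < f i) (b : ℕ) : ∃ t : Finset ι, ↑t ⊆ s ∧ b < ∏ i ∈ t, f i := by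
  obtain ⟨t, hts, hcard⟩ := hs.exists_subset_card_eq b
  refine ⟨t, hts, ?_⟩
  calc b < 2 ^ b := Nat.lt_two_pow_self
    _ = 2 ^ #t := by rw [hcard]
    _ ≤ ∏ i ∈ t, f i := pow_card_le_prod _ _ _ fun i hi => hf i (hts hi)

theorem Int.eq_zero_of_forall_exists_lt_dvd {x : ℤ} (h : ∀ b : ℕ, ∃ d : ℕ, b < d ∧ (d : ℤ) ∣ x) :
    x = 0 := by
  obtain ⟨d, hlt, hdvd⟩ := h x.natAbs
  exact Int.eq_zero_of_dvd_of_natAbs_lt_natAbs hdvd (by simpa using hlt)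

theorem chern_classes_vanish_on_twisted_ind_space_general
    (deg : ℕ → ℕ) (hinf : {N | 1 < deg N}.Infinite)
    (c : ℕ → ℕ → ℤ)
    (hc : ∀ q N, c q N = (deg N : ℤ) ^ q * c q (N + 1)) :
    ∀ q N, 1 ≤ q → c q N = 0 := by
  intro q N hq
  refine Int.eq_zero_of_forall_exists_lt_dvd fun b => ?_
  obtain ⟨t, hts, hb⟩ := (hinf.sdiff (Set.finite_Iio N)).exists_lt_prod (fun k hk => hk.1) b
  refine ⟨∏ k ∈ t, deg k, hb, ?_⟩
  calc ((∏ k ∈ t, deg k : ℕ) : ℤ) ∣ (∏ k ∈ t, (deg k : ℤ)) ^ q := by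
        push_cast
        exact dvd_pow_self _ (by omega)
    _ = ∏ k ∈ t, (deg k : ℤ) ^ q := (prod_pow _ _ _).symm
    _ ∣ c q N := prod_dvd_of_eq_mul_succ (hc q) fun k hk => not_lt.1 (hts hk).2

/-- Chern classes of a vector bundle on a twisted projective ind-space vanish.
Here `deg N` is the degree of the morphism `φ_N : P^{i_N} → P^{i_{N+1}}`, and
`c q N ∈ H^{2q}(P^{i_N}, ℤ) ≅ ℤ` is the `q`-th Chern class of `E_N`.  Since
`φ_N^* E_{N+1} ≅ E_N` and `φ_N^*` acts on `H^{2q} ≅ ℤ` as multiplication by `(deg N)^q`,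
we have `c q N = (deg N)^q * c q (N+1)`.  If infinitely many degrees exceed `1`, all
Chern classes `c q N` with `q ≥ 1` vanish. -/
theorem chern_classes_vanish_on_twisted_ind_space
    (deg : ℕ → ℕ) (hdeg : ∀ N, 1 ≤ deg N) (hinf : {N | 1 < deg N}.Infinite)
    (c : ℕ → ℕ → ℤ)
    (hc : ∀ q N, c q N = (deg N : ℤ) ^ q * c q (N + 1)) :
    ∀ q N, 1 ≤ q → c q N = 0 :=
  chern_classes_vanish_on_twisted_ind_space_general deg hinf c hc
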